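/- Let s ∈ (0,1) be irrational. Then s is oddly even, i.e. ⌊1/γ^{2j}(s)⌋ is even for every integer j ≥ 0 (equivalently, in the continued fraction expansion s = [0; a₁, a₂, a₃, …], the partial quotient a_k is even for every odd index k), if and only if Rᵏ(s) ∈ (0, 1/2) for every integer k ≥ 0. -/

import Mathlib

/-- The renormalization map `R : (0,1) → [0,1)`: `R(x) = 1 − x` if `x ≥ 1/2`, and
`R(x) = 1/(2x) − ⌊1/(2x)⌋` if `x < 1/2`. -/
noncomputable def Rmap (x : ℝ) : ℝ :=
  if x < 1/2 then 1 / (2 * x) - ⌊1 / (2 * x)⌋ else 1 - x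

/-- The Gauss map `γ(x) = 1/x − ⌊1/x⌋`. -/
noncomputable def gaussMap (x : ℝ) : ℝ := 1 / x - ⌊1 / x⌋

/-!
Since `1/(2s) = ⌊1/s⌋/2 + γ(s)/2`, for `s < 1/2` the map `R` sends `s` to `γ(s)/2` when
`⌊1/s⌋` is even and to `(1 + γ(s))/2 ≥ 1/2` when it is odd; moreover `R(γ(s)/2) = γ²(s)`.
Hence, as long as the odd-indexed partial quotients are even, `R²ʲ(s) = γ²ʲ(s)` and the orbit
stays in `(0, 1/2)`, while the first odd-indexed partial quotient that is odd sends the orbit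
to `[1/2, 1)`.
-/

open Set Function

lemma gaussMap_eq_fract (x : ℝ) : gaussMap x = Int.fract (1 / x) := rfl

lemma gaussMap_lt_one (x : ℝ) : gaussMap x < 1 := Int.fract_lt_one _

lemma Rmap_of_lt_half {x : ℝ} (hx : x < 1/2) : Rmap x = Int.fract (1 / (2 * x)) := by
  rw [Rmap, if_pos hx, Int.self_sub_floor]

lemma irrational_gaussMap {x : ℝ} (hx : Irrational x) : Irrational (gaussMap x) := by
  rw [gaussMap, one_div]
  exact hx.inv.sub_intCast _

lemma gaussMap_mem_Ioo_of_irrational {x : ℝ} (hx : Irrational x) :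
    gaussMap x ∈ Ioo (0 : ℝ) 1 := by
  refine ⟨(Int.fract_nonneg _).lt_of_ne ?_, gaussMap_lt_one x⟩
  exact_mod_cast ((irrational_gaussMap hx).ne_int 0).symm

lemma irrational_iterate_gaussMap {x : ℝ} (hx : Irrational x) (n : ℕ) :
    Irrational (gaussMap^[n] x) := by
  induction n with
  | zero => exact hx
  | succ n ih => rw [iterate_succ_apply']; exact irrational_gaussMap ih

lemma iterate_gaussMap_mem_Ioo {x : ℝ} (hx : x ∈ Ioo (0 : ℝ) 1) (hirr : Irrational x)
    (n : ℕ) : gaussMap^[n] x ∈ Ioo (0 : ℝ) 1 := by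
  cases n with
  | zero => exact hx
  | succ n =>
    rw [iterate_succ_apply']
    exact gaussMap_mem_Ioo_of_irrational (irrational_iterate_gaussMap hirr n)

lemma one_div_two_mul_eq (x : ℝ) : 1 / (2 * x) = (⌊1 / x⌋ + gaussMap x) / 2 := by
  rw [gaussMap_eq_fract, Int.floor_add_fract]
  ring

lemma Rmap_div_two {x : ℝ} (hx : x < 1) : Rmap (x / 2) = gaussMap x := by
  rw [Rmap_of_lt_half (by linarith), mul_div_cancel₀ x two_ne_zero, gaussMap_eq_fract]

lemma Rmap_of_even_floor {x : ℝ} (hx : x < 1/2) (he : Even ⌊1 / x⌋) :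
    Rmap x = gaussMap x / 2 := by
  obtain ⟨m, hm⟩ := he
  have hγ := gaussMap_lt_one x
  have hγ₀ : 0 ≤ gaussMap x := Int.fract_nonneg _
  rw [Rmap_of_lt_half hx, one_div_two_mul_eq, hm, Int.cast_add,
    show ((m : ℝ) + m + gaussMap x) / 2 = m + gaussMap x / 2 by ring, Int.fract_intCast_add,
    Int.fract_eq_self]
  constructor <;> linarith

lemma Rmap_of_odd_floor {x : ℝ} (hx : x < 1/2) (ho : Odd ⌊1 / x⌋) :
    Rmap x = (1 + gaussMap x) / 2 := by
  obtain ⟨m, hm⟩ := ho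
  have hγ := gaussMap_lt_one x
  have hγ₀ : 0 ≤ gaussMap x := Int.fract_nonneg _
  rw [Rmap_of_lt_half hx, one_div_two_mul_eq, hm]
  push_cast
  rw [show (2 * (m : ℝ) + 1 + gaussMap x) / 2 = m + (1 + gaussMap x) / 2 by ring,
    Int.fract_intCast_add, Int.fract_eq_self]
  constructor <;> linarith

lemma Rmap_iterate_two_of_even_floor {x : ℝ} (hx : x < 1/2) (he : Even ⌊1 / x⌋) :
    Rmap^[2] x = gaussMap^[2] x := by
  simp only [iterate_succ_apply', iterate_zero_apply]
  rw [Rmap_of_even_floor hx he, Rmap_div_two (gaussMap_lt_one x)]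

lemma lt_half_of_even_floor_one_div {x : ℝ} (hx : x ∈ Ioo (0 : ℝ) 1) (hirr : Irrational x)
    (he : Even ⌊1 / x⌋) : x < 1/2 := by
  have h_one_le : (1 : ℤ) ≤ ⌊1 / x⌋ :=
    Int.le_floor.2 (by exact_mod_cast (one_lt_one_div hx.1 hx.2).le)
  have h_two_le : (2 : ℤ) ≤ ⌊1 / x⌋ := by
    obtain ⟨m, hm⟩ := he
    omega
  have h_ne : 1 / x ≠ 2 := by rw [one_div]; exact_mod_cast hirr.inv.ne_int 2
  have h_two_lt : 2 < 1 / x :=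
    ((Int.le_floor.1 h_two_le).trans_eq' (by norm_num)).lt_of_ne h_ne.symm
  rw [lt_div_iff₀ hx.1] at h_two_lt
  linarith

lemma Rmap_iterate_two_mul {x : ℝ} (hx : x ∈ Ioo (0 : ℝ) 1) (hirr : Irrational x) (n : ℕ)
    (he : ∀ j < n, Even ⌊1 / gaussMap^[2 * j] x⌋) : Rmap^[2 * n] x = gaussMap^[2 * n] x := by
  induction n with
  | zero => rfl
  | succ n ih =>
    have hen := he n n.lt_succ_self
    have hlt := lt_half_of_even_floor_one_div (iterate_gaussMap_mem_Ioo hx hirr _)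
      (irrational_iterate_gaussMap hirr _) hen
    rw [mul_add, mul_one, add_comm, iterate_add_apply, iterate_add_apply,
      ih fun j hj => he j (hj.trans n.lt_succ_self), Rmap_iterate_two_of_even_floor hlt hen]

/-- An irrational `s ∈ (0,1)` is *oddly even* (every odd-indexed partial
quotient of its continued fraction is even, i.e. `⌊1/γ^{2j}(s)⌋` is even for all `j ≥ 0`)
if and only if `Rᵏ(s) ∈ (0, 1/2)` for every `k ≥ 0`. -/
theorem oddly_even_iff_R_orbit_below_half (s : ℝ) (hs : s ∈ Set.Ioo (0 : ℝ) 1)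
    (hirr : Irrational s) :
    (∀ j : ℕ, Even ⌊1 / gaussMap^[2 * j] s⌋) ↔
      (∀ k : ℕ, Rmap^[k] s ∈ Set.Ioo (0 : ℝ) (1/2)) := by
  have hγ (n : ℕ) := gaussMap_mem_Ioo_of_irrational (irrational_iterate_gaussMap hirr n)
  have hlt (j : ℕ) (he : Even ⌊1 / gaussMap^[2 * j] s⌋) : gaussMap^[2 * j] s < 1/2 :=
    lt_half_of_even_floor_one_div (iterate_gaussMap_mem_Ioo hs hirr _)
      (irrational_iterate_gaussMap hirr _) he
  constructor
  · intro he k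
    have hRj (j : ℕ) := Rmap_iterate_two_mul hs hirr j fun i _ => he i
    obtain ⟨j, rfl | rfl⟩ := k.even_or_odd'
    · rw [hRj]
      exact ⟨(iterate_gaussMap_mem_Ioo hs hirr _).1, hlt j (he j)⟩
    · rw [iterate_succ_apply', hRj, Rmap_of_even_floor (hlt j (he j)) (he j)]
      constructor <;> linarith [(hγ (2 * j)).1, (hγ (2 * j)).2]
  · intro hR j
    induction j using Nat.strong_induction_on with
    | _ j ih =>
      have hRj := Rmap_iterate_two_mul hs hirr j ih
      by_contra hodd
      have hnext := (hR (2 * j + 1)).2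
      rw [iterate_succ_apply', hRj, Rmap_of_odd_floor (hRj ▸ (hR (2 * j)).2)
        (Int.not_even_iff_odd.1 hodd)] at hnext
      linarith [(hγ (2 * j)).1]
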